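/- Let U ⊆ ℂ be an open set, let h, g : U → ℝ be smooth positive functions, let A ≥ 0, u > 0 and m > 0 be real numbers. Assume H(g)(z) ≤ A for all z ∈ U, H(h)(z) ≤ 0 for all z ∈ U, and h(z) ≥ u·g(z) for all z ∈ U. Then for every z ∈ U, H(m·h+g)(z) ≤ (1/(1+m·u))² · A + (m·u/(1+m·u))² · (1/m) · H(h)(z). -/

import Mathlib

open Filter

/-- The Laplacian `Δu = ∂²u/∂x² + ∂²u/∂y²` of a function `u : ℂ → ℝ`,
where `ℂ ≅ ℝ²` with directions `1` and `I`. -/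
noncomputable def planeLaplacian (u : ℂ → ℝ) (z : ℂ) : ℝ :=
  fderiv ℝ (fun w => fderiv ℝ u w 1) z 1 +
    fderiv ℝ (fun w => fderiv ℝ u w Complex.I) z Complex.I

/-- The Gaussian curvature `H(g) = -(1/(4g)) Δ(log g)` of the conformal
metric `ds² = 2 g dz dz̄` with density `g`. -/
noncomputable def Hcurv (g : ℂ → ℝ) (z : ℂ) : ℝ :=
  -(1 / (4 * g z)) * planeLaplacian (fun w => Real.log (g w)) z

lemma log_second (U : Set ℂ) (hU : IsOpen U) (f : ℂ → ℝ)
    (hf : ContDiffOn ℝ (⊤ : ℕ∞) f U) (hfpos : ∀ z ∈ U, 0 < f z) {z : ℂ} (hz : z ∈ U) (v : ℂ) :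
    fderiv ℝ (fun w => fderiv ℝ (fun x => Real.log (f x)) w v) z v
      = fderiv ℝ (fun w => fderiv ℝ f w v) z v / f z - (fderiv ℝ f z v) ^ 2 / (f z) ^ 2 := by
  have hdiffat : ∀ w ∈ U, DifferentiableAt ℝ f w := fun w hw =>
    (hf.contDiffAt (hU.mem_nhds hw)).differentiableAt (by simp)
  have hfd : ∀ w ∈ U, fderiv ℝ (fun x => Real.log (f x)) w v = (f w)⁻¹ * fderiv ℝ f w v := by
    intro w hw
    have hne := (hfpos w hw).ne'
    have h1 : HasFDerivAt (fun x => Real.log (f x)) ((f w)⁻¹ • fderiv ℝ f w) w :=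
      (Real.hasDerivAt_log hne).comp_hasFDerivAt w (hdiffat w hw).hasFDerivAt
    rw [h1.fderiv]; rfl
  have heq : (fun w => fderiv ℝ (fun x => Real.log (f x)) w v)
      =ᶠ[nhds z] (fun w => (f w)⁻¹ * fderiv ℝ f w v) :=
    Filter.eventuallyEq_of_mem (hU.mem_nhds hz) hfd
  rw [heq.fderiv_eq]
  have hne := (hfpos z hz).ne'
  have hp : DifferentiableAt ℝ (fun w => fderiv ℝ f w) z :=
    ((hf.contDiffAt (hU.mem_nhds hz)).fderiv_right (WithTop.coe_le_coe.mpr le_top : (1:WithTop ℕ∞) + 1 ≤ ((⊤ : ℕ∞) : WithTop ℕ∞))).differentiableAt one_ne_zero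
  have hdp : DifferentiableAt ℝ (fun w => fderiv ℝ f w v) z :=
    hp.clm_apply (differentiableAt_const v)
  have hpv : HasFDerivAt (fun w => fderiv ℝ f w v)
      (fderiv ℝ (fun w => fderiv ℝ f w v) z) z := hdp.hasFDerivAt
  have hinv : HasFDerivAt (fun w => (f w)⁻¹) ((-((f z) ^ 2)⁻¹) • fderiv ℝ f z) z :=
    (hasDerivAt_inv hne).comp_hasFDerivAt z (hdiffat z hz).hasFDerivAt
  have hmul := hinv.mul hpv
  rw [HasFDerivAt.fderiv (f := fun w => (f w)⁻¹ * fderiv ℝ f w v) hmul]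
  simp only [ContinuousLinearMap.add_apply, ContinuousLinearMap.smul_apply, smul_eq_mul]
  field_simp
  ring

lemma diff_fderiv_apply (U : Set ℂ) (hU : IsOpen U) (f : ℂ → ℝ)
    (hf : ContDiffOn ℝ (⊤ : ℕ∞) f U) {z : ℂ} (hz : z ∈ U) (v : ℂ) :
    DifferentiableAt ℝ (fun w => fderiv ℝ f w v) z :=
  (((hf.contDiffAt (hU.mem_nhds hz)).fderiv_right (WithTop.coe_le_coe.mpr le_top : (1:WithTop ℕ∞) + 1 ≤ ((⊤ : ℕ∞) : WithTop ℕ∞))).differentiableAt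
    one_ne_zero).clm_apply (differentiableAt_const v)

lemma second_linear (U : Set ℂ) (hU : IsOpen U) (h g : ℂ → ℝ)
    (hh : ContDiffOn ℝ (⊤ : ℕ∞) h U) (hg : ContDiffOn ℝ (⊤ : ℕ∞) g U) (m : ℝ)
    {z : ℂ} (hz : z ∈ U) (v : ℂ) :
    fderiv ℝ (fun w => fderiv ℝ (fun x => m * h x + g x) w v) z v
      = m * fderiv ℝ (fun w => fderiv ℝ h w v) z v
        + fderiv ℝ (fun w => fderiv ℝ g w v) z v := by
  have hdh : ∀ w ∈ U, DifferentiableAt ℝ h w := fun w hw =>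
    (hh.contDiffAt (hU.mem_nhds hw)).differentiableAt (by simp)
  have hdg : ∀ w ∈ U, DifferentiableAt ℝ g w := fun w hw =>
    (hg.contDiffAt (hU.mem_nhds hw)).differentiableAt (by simp)
  have hfd : ∀ w ∈ U, fderiv ℝ (fun x => m * h x + g x) w v
      = m * fderiv ℝ h w v + fderiv ℝ g w v := by
    intro w hw
    have h1 : HasFDerivAt (fun x => m * h x + g x)
        (m • fderiv ℝ h w + fderiv ℝ g w) w :=
      (((hdh w hw).hasFDerivAt).const_smul m).add (hdg w hw).hasFDerivAt
    rw [h1.fderiv]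
    simp
  have heq : (fun w => fderiv ℝ (fun x => m * h x + g x) w v)
      =ᶠ[nhds z] (fun w => m * fderiv ℝ h w v + fderiv ℝ g w v) :=
    Filter.eventuallyEq_of_mem (hU.mem_nhds hz) hfd
  rw [heq.fderiv_eq]
  have dh2 := diff_fderiv_apply U hU h hh hz v
  have dg2 := diff_fderiv_apply U hU g hg hz v
  rw [fderiv_fun_add (dh2.const_mul m) dg2]
  simp [fderiv_const_mul dh2]

lemma cs_aux {p q mm x y : ℝ} (hp : 0 < p) (hq : 0 < q) (hmm : 0 < mm) :
    (mm * y + x) ^ 2 / (mm * q + p) ≤ x ^ 2 / p + mm * y ^ 2 / q := by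
  rw [div_add_div _ _ hp.ne' hq.ne', div_le_div_iff₀ (by positivity) (by positivity)]
  nlinarith [sq_nonneg (x * q - y * p), mul_pos hp hq, sq_nonneg x, sq_nonneg y,
    mul_pos (mul_pos hmm hq) hp]

set_option maxHeartbeats 1000000 in
/-- If `H(g) ≤ A`, `H(h) ≤ 0` and `h ≥ u·g` on `U`, then for `m > 0`,
`H(m·h+g) ≤ (1/(1+m·u))²·A + (m·u/(1+m·u))²·(1/m)·H(h)`. -/
theorem Hcurv_smul_add_le_of_bounds (U : Set ℂ) (hU : IsOpen U) (h g : ℂ → ℝ)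
    (hh : ContDiffOn ℝ (⊤ : ℕ∞) h U) (hhpos : ∀ z ∈ U, 0 < h z)
    (hg : ContDiffOn ℝ (⊤ : ℕ∞) g U) (hgpos : ∀ z ∈ U, 0 < g z)
    (A u m : ℝ) (hA : 0 ≤ A) (hu : 0 < u) (hm : 0 < m)
    (hHg : ∀ z ∈ U, Hcurv g z ≤ A) (hHh : ∀ z ∈ U, Hcurv h z ≤ 0)
    (hhg : ∀ z ∈ U, h z ≥ u * g z) :
    ∀ z ∈ U, Hcurv (fun w => m * h w + g w) z
      ≤ (1 / (1 + m * u)) ^ 2 * A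
        + (m * u / (1 + m * u)) ^ 2 * (1 / m) * Hcurv h z := by
  intro z hz
  have hFc : ContDiffOn ℝ (⊤ : ℕ∞) (fun w => m * h w + g w) U := (contDiffOn_const.mul hh).add hg
  have hFpos : ∀ w ∈ U, 0 < m * h w + g w := fun w hw =>
    add_pos (mul_pos hm (hhpos w hw)) (hgpos w hw)
  have hbpos := hhpos z hz
  have hapos := hgpos z hz
  have hspos : 0 < m * h z + g z := hFpos z hz
  -- first-order linearity at z
  have hdh : DifferentiableAt ℝ h z := (hh.contDiffAt (hU.mem_nhds hz)).differentiableAt (by simp)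
  have hdg : DifferentiableAt ℝ g z := (hg.contDiffAt (hU.mem_nhds hz)).differentiableAt (by simp)
  have efirst : ∀ v : ℂ, fderiv ℝ (fun x => m * h x + g x) z v
      = m * fderiv ℝ h z v + fderiv ℝ g z v := by
    intro v
    have h1 : HasFDerivAt (fun x => m * h x + g x)
        (m • fderiv ℝ h z + fderiv ℝ g z) z :=
      ((hdh.hasFDerivAt).const_smul m).add hdg.hasFDerivAt
    rw [h1.fderiv]; simp
  -- key formula for Δ log f
  have K : ∀ (f : ℂ → ℝ), ContDiffOn ℝ (⊤ : ℕ∞) f U → (∀ w ∈ U, 0 < f w) →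
      planeLaplacian (fun w => Real.log (f w)) z
        = planeLaplacian f z / f z
          - ((fderiv ℝ f z 1) ^ 2 + (fderiv ℝ f z Complex.I) ^ 2) / (f z) ^ 2 := by
    intro f hf hfp
    unfold planeLaplacian
    rw [log_second U hU f hf hfp hz 1, log_second U hU f hf hfp hz Complex.I]
    ring
  have Kg := K g hg hgpos
  have Kh := K h hh hhpos
  have KF := K (fun w => m * h w + g w) hFc hFpos
  beta_reduce at KF
  have PF : planeLaplacian (fun w => m * h w + g w) z
      = m * planeLaplacian h z + planeLaplacian g z := by
    unfold planeLaplacian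
    rw [second_linear U hU h g hh hg m hz 1, second_linear U hU h g hh hg m hz Complex.I]
    ring
  -- express curvatures
  have Eg : planeLaplacian g z
      = ((fderiv ℝ g z 1) ^ 2 + (fderiv ℝ g z Complex.I) ^ 2) / g z
        - 4 * (g z) ^ 2 * Hcurv g z := by
    simp only [Hcurv]
    rw [Kg]
    field_simp
    ring
  have Eh : planeLaplacian h z
      = ((fderiv ℝ h z 1) ^ 2 + (fderiv ℝ h z Complex.I) ^ 2) / h z
        - 4 * (h z) ^ 2 * Hcurv h z := by
    simp only [Hcurv]
    rw [Kh]
    field_simp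
    ring
  have EF : Hcurv (fun w => m * h w + g w) z
      = -(1 / (4 * (m * h z + g z)))
        * ((m * planeLaplacian h z + planeLaplacian g z) / (m * h z + g z)
          - ((m * fderiv ℝ h z 1 + fderiv ℝ g z 1) ^ 2
            + (m * fderiv ℝ h z Complex.I + fderiv ℝ g z Complex.I) ^ 2)
            / (m * h z + g z) ^ 2) := by
    simp only [Hcurv]
    rw [KF, PF, efirst 1, efirst Complex.I]
  rw [EF]
  have hHgz := hHg z hz
  have hHhz := hHh z hz
  have hba := hhg z hz
  set a := g z with ha
  set b := h z with hb
  set x1 := fderiv ℝ g z 1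
  set xI := fderiv ℝ g z Complex.I
  set y1 := fderiv ℝ h z 1
  set yI := fderiv ℝ h z Complex.I
  set Hg := Hcurv g z
  set Hh := Hcurv h z
  set P := planeLaplacian g z
  set Q := planeLaplacian h z
  -- Cauchy–Schwarz per direction
  have c1 : (m * y1 + x1) ^ 2 / (m * b + a) ≤ x1 ^ 2 / a + m * y1 ^ 2 / b :=
    cs_aux hapos hbpos hm
  have cI : (m * yI + xI) ^ 2 / (m * b + a) ≤ xI ^ 2 / a + m * yI ^ 2 / b :=
    cs_aux hapos hbpos hm
  have expand : -(1 / (4 * (m * b + a)))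
      * ((m * Q + P) / (m * b + a)
        - ((m * y1 + x1) ^ 2 + (m * yI + xI) ^ 2) / (m * b + a) ^ 2)
      = (a / (m * b + a)) ^ 2 * Hg + m * (b / (m * b + a)) ^ 2 * Hh
        + (((m * y1 + x1) ^ 2 + (m * yI + xI) ^ 2) / (m * b + a)
            - (x1 ^ 2 + xI ^ 2) / a - m * (y1 ^ 2 + yI ^ 2) / b) / (4 * (m * b + a) ^ 2) := by
    rw [Eg, Eh]
    field_simp
    ring
  rw [expand]
  have hrest : (((m * y1 + x1) ^ 2 + (m * yI + xI) ^ 2) / (m * b + a)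
      - (x1 ^ 2 + xI ^ 2) / a - m * (y1 ^ 2 + yI ^ 2) / b) / (4 * (m * b + a) ^ 2) ≤ 0 := by
    apply div_nonpos_of_nonpos_of_nonneg
    · have e1 : (x1 ^ 2 + xI ^ 2) / a = x1 ^ 2 / a + xI ^ 2 / a := by ring
      have e2 : m * (y1 ^ 2 + yI ^ 2) / b = m * y1 ^ 2 / b + m * yI ^ 2 / b := by ring
      have e3 : ((m * y1 + x1) ^ 2 + (m * yI + xI) ^ 2) / (m * b + a)
          = (m * y1 + x1) ^ 2 / (m * b + a) + (m * yI + xI) ^ 2 / (m * b + a) := by ring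
      rw [e1, e2, e3]
      linarith
    · positivity
  have humu : (0:ℝ) < 1 + m * u := by positivity
  have step2 : (a / (m * b + a)) ^ 2 * Hg ≤ (1 / (1 + m * u)) ^ 2 * A := by
    have h1 : a / (m * b + a) ≤ 1 / (1 + m * u) := by
      rw [div_le_div_iff₀ hspos humu]
      have := mul_le_mul_of_nonneg_left hba hm.le
      nlinarith [this]
    have h2 : (a / (m * b + a)) ^ 2 ≤ (1 / (1 + m * u)) ^ 2 :=
      pow_le_pow_left₀ (by positivity) h1 2
    calc (a / (m * b + a)) ^ 2 * Hg ≤ (a / (m * b + a)) ^ 2 * A :=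
          mul_le_mul_of_nonneg_left hHgz (by positivity)
      _ ≤ (1 / (1 + m * u)) ^ 2 * A := mul_le_mul_of_nonneg_right h2 hA
  have step3 : m * (b / (m * b + a)) ^ 2 * Hh
      ≤ (m * u / (1 + m * u)) ^ 2 * (1 / m) * Hh := by
    have e : (m * u / (1 + m * u)) ^ 2 * (1 / m) = m * (u / (1 + m * u)) ^ 2 := by
      field_simp
    rw [e]
    have h3 : u / (1 + m * u) ≤ b / (m * b + a) := by
      rw [div_le_div_iff₀ humu hspos]
      nlinarith [hba, mul_pos hm hbpos]
    have h4 : (u / (1 + m * u)) ^ 2 ≤ (b / (m * b + a)) ^ 2 :=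
      pow_le_pow_left₀ (by positivity) h3 2
    have h5 : m * (u / (1 + m * u)) ^ 2 ≤ m * (b / (m * b + a)) ^ 2 :=
      mul_le_mul_of_nonneg_left h4 hm.le
    exact mul_le_mul_of_nonpos_right h5 hHhz
  linarith
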